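/- arXiv:1404.2298 — 6 statements merged into one kernel-verified Lean document; each statement's English description precedes it below -/
import Mathlib

section
/- For every nonzero real number x₀ and every upper semi-continuous log-concave probability density f on ℝ with mean zero, f(x₀) ≤ 1/|x₀|. -/
/-!
For `a ≤ b ≤ d`, log-concavity applied at the two points `a, d` with weights swapped gives
`f a * f d ≤ f b * f (a + d - b)`. Integrating over `a < t` turns this into
`f s * F t ≤ f t * F s` for `t ≤ s`, where `F t = ∫_{x<t} f`; integrating once more over
`t ≤ s` and using `∫_{t≤s} F t = ∫ (s - x)⁺ f x` yields `f s * ∫ (s - x)⁺ f x ≤ 1`, and the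
mirror image `f s * ∫ (x - s)⁺ f x ≤ 1`. So `f` has a finite first moment, and as the mean is
zero, `∫ (s - x) f x = s`: one of the two parts is at least `|s|`.
-/

open MeasureTheory Set
open scoped ENNReal

lemma lintegral_Iic_lintegral_Iio {g : ℝ → ℝ≥0∞} (hg : Measurable g) (s : ℝ) :
    ∫⁻ t in Iic s, ∫⁻ x in Iio t, g x = ∫⁻ x, ENNReal.ofReal (s - x) * g x := by
  set S : Set (ℝ × ℝ) := {p | p.1 < p.2 ∧ p.2 ≤ s}
  have hS : MeasurableSet S :=
    (measurableSet_lt measurable_fst measurable_snd).inter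
      (measurableSet_le measurable_snd measurable_const)
  have hslice_t : ∀ t, ∫⁻ x, S.indicator (fun p => g p.1) (x, t)
      = (Iic s).indicator (fun t => ∫⁻ x in Iio t, g x) t := by
    intro t
    by_cases ht : t ≤ s
    · rw [indicator_of_mem (mem_Iic.2 ht), ← lintegral_indicator measurableSet_Iio]
      congr with x
      simp [S, indicator, ht]
    · simp [S, ht]
  have hslice_x : ∀ x, ∫⁻ t, S.indicator (fun p => g p.1) (x, t)
      = ENNReal.ofReal (s - x) * g x := by
    intro x
    have hslice : (fun t => S.indicator (fun p => g p.1) (x, t))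
        = (Ioc x s).indicator fun _ => g x := by
      ext t; simp [S, indicator]
    rw [hslice, lintegral_indicator_const measurableSet_Ioc, Real.volume_Ioc, mul_comm]
  rw [← lintegral_indicator measurableSet_Iic]
  simp_rw [← hslice_t, ← hslice_x]
  refine (lintegral_lintegral_swap (f := fun x t => S.indicator (fun p => g p.1) (x, t)) ?_).symm
  exact ((hg.comp measurable_fst).indicator hS).aemeasurable

section PosNegParts

variable {α : Type*} [MeasurableSpace α] {μ : Measure α} {g : α → ℝ}

lemma integrable_of_lintegral_ofReal_ne_top (hg : AEStronglyMeasurable g μ)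
    (hpos : ∫⁻ x, ENNReal.ofReal (g x) ∂μ ≠ ∞) (hneg : ∫⁻ x, ENNReal.ofReal (-g x) ∂μ ≠ ∞) :
    Integrable g μ := by
  refine ⟨hg, ?_⟩
  calc ∫⁻ x, ‖g x‖ₑ ∂μ = ∫⁻ x, ENNReal.ofReal (g x) + ENNReal.ofReal (-g x) ∂μ := by
        congr with x
        rcases le_total 0 (g x) with h | h
        · simp [Real.enorm_eq_ofReal_abs, abs_of_nonneg h,
            ENNReal.ofReal_of_nonpos (neg_nonpos.2 h)]
        · simp [Real.enorm_eq_ofReal_abs, abs_of_nonpos h, ENNReal.ofReal_of_nonpos h]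
    _ = ∫⁻ x, ENNReal.ofReal (g x) ∂μ + ∫⁻ x, ENNReal.ofReal (-g x) ∂μ :=
        lintegral_add_left' hg.aemeasurable.ennreal_ofReal _
    _ < ∞ := ENNReal.add_lt_top.2 ⟨hpos.lt_top, hneg.lt_top⟩

lemma ofReal_abs_integral_le_max (hg : Integrable g μ) :
    ENNReal.ofReal |∫ x, g x ∂μ|
      ≤ max (∫⁻ x, ENNReal.ofReal (g x) ∂μ) (∫⁻ x, ENNReal.ofReal (-g x) ∂μ) := by
  set A := ∫⁻ x, ENNReal.ofReal (g x) ∂μ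
  set B := ∫⁻ x, ENNReal.ofReal (-g x) ∂μ
  have hA : A ≠ ∞ :=
    ne_top_of_le_ne_top hg.2.ne (lintegral_mono fun x => Real.ofReal_le_enorm _)
  have hB : B ≠ ∞ :=
    ne_top_of_le_ne_top hg.neg.2.ne (lintegral_mono fun x => Real.ofReal_le_enorm _)
  rw [integral_eq_lintegral_pos_part_sub_lintegral_neg_part hg,
    ENNReal.ofReal_le_iff_le_toReal (max_ne_top hA hB), ENNReal.toReal_max hA hB,
    ← max_sub_min_eq_abs']
  exact sub_le_self _ (le_min ENNReal.toReal_nonneg ENNReal.toReal_nonneg)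

end PosNegParts

def IsLogConcave (f : ℝ → ℝ) : Prop :=
  ∀ x y a b : ℝ, 0 ≤ a → 0 ≤ b → a + b = 1 → f x ^ a * f y ^ b ≤ f (a * x + b * y)

namespace IsLogConcave

variable {f : ℝ → ℝ}

lemma comp_neg (hf : IsLogConcave f) : IsLogConcave fun x => f (-x) := by
  intro x y a b ha hb hab
  simpa only [mul_neg, neg_add] using hf (-x) (-y) a b ha hb hab

lemma mul_le_mul_sub (hf : IsLogConcave f) (hf0 : ∀ x, 0 ≤ f x) {a b d : ℝ}
    (hab : a ≤ b) (hbd : b ≤ d) : f a * f d ≤ f b * f (a + d - b) := by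
  rcases hab.eq_or_lt with rfl | hab'
  · rw [add_sub_cancel_left, mul_comm]
  have had : 0 < d - a := by linarith
  set s := (d - b) / (d - a) with hs_def
  set r := (b - a) / (d - a) with hr_def
  have hs : 0 ≤ s := div_nonneg (by linarith) had.le
  have hr : 0 ≤ r := div_nonneg (by linarith) had.le
  have hsr : s + r = 1 := by rw [hs_def, hr_def]; field_simp; ring
  have hb : s * a + r * d = b := by rw [hs_def, hr_def]; field_simp; ring
  have hc : r * a + s * d = a + d - b := by rw [hs_def, hr_def]; field_simp; ring
  calc f a * f d = (f a ^ s * f d ^ r) * (f a ^ r * f d ^ s) := by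
        rw [mul_mul_mul_comm, ← Real.rpow_add' (hf0 a) (by rw [hsr]; norm_num),
          ← Real.rpow_add' (hf0 d) (by rw [add_comm, hsr]; norm_num), hsr, add_comm r s, hsr,
          Real.rpow_one, Real.rpow_one]
    _ ≤ f b * f (a + d - b) := by
        rw [← hc, ← hb]
        exact mul_le_mul (hf a d s r hs hr hsr) (hf a d r s hr hs (by linarith))
          (mul_nonneg (Real.rpow_nonneg (hf0 a) _) (Real.rpow_nonneg (hf0 d) _)) (hf0 _)

lemma ofReal_mul_lintegral_Iio_le (hf : IsLogConcave f) (hf0 : ∀ x, 0 ≤ f x) {t s : ℝ}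
    (hts : t ≤ s) :
    ENNReal.ofReal (f s) * ∫⁻ y in Iio t, ENNReal.ofReal (f y)
      ≤ ENNReal.ofReal (f t) * ∫⁻ y in Iio s, ENNReal.ofReal (f y) := by
  have hshift : ∫⁻ y in Iio t, ENNReal.ofReal (f (y + (s - t)))
      = ∫⁻ y in Iio s, ENNReal.ofReal (f y) := by
    have := (measurePreserving_add_right volume (s - t)).setLIntegral_comp_preimage_emb
      (measurableEmbedding_addRight (s - t)) (fun y => ENNReal.ofReal (f y)) (Iio s)
    rwa [preimage_add_const_Iio, sub_sub_cancel] at this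
  rw [← hshift, ← lintegral_const_mul' _ _ ENNReal.ofReal_ne_top,
    ← lintegral_const_mul' _ _ ENNReal.ofReal_ne_top]
  refine setLIntegral_mono' measurableSet_Iio fun y hy => ?_
  rw [← ENNReal.ofReal_mul (hf0 s), ← ENNReal.ofReal_mul (hf0 t), mul_comm (f s)]
  simpa only [add_sub_assoc] using ENNReal.ofReal_le_ofReal (hf.mul_le_mul_sub hf0 hy.le hts)

lemma ofReal_mul_lintegral_sub_mul_le (hf : IsLogConcave f) (hf0 : ∀ x, 0 ≤ f x)
    (hmeas : Measurable f) (s : ℝ) :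
    ENNReal.ofReal (f s) * ∫⁻ x, ENNReal.ofReal ((s - x) * f x)
      ≤ (∫⁻ x, ENNReal.ofReal (f x)) ^ 2 := by
  set F := fun t => ∫⁻ y in Iio t, ENNReal.ofReal (f y)
  simp_rw [ENNReal.ofReal_mul' (hf0 _)]
  rw [← lintegral_Iic_lintegral_Iio hmeas.ennreal_ofReal,
    ← lintegral_const_mul' _ _ ENNReal.ofReal_ne_top]
  calc ∫⁻ t in Iic s, ENNReal.ofReal (f s) * F t
      ≤ ∫⁻ t in Iic s, ENNReal.ofReal (f t) * F s :=
        setLIntegral_mono' measurableSet_Iic fun t ht => hf.ofReal_mul_lintegral_Iio_le hf0 ht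
    _ = (∫⁻ t in Iic s, ENNReal.ofReal (f t)) * F s :=
        lintegral_mul_const _ hmeas.ennreal_ofReal
    _ ≤ (∫⁻ x, ENNReal.ofReal (f x)) ^ 2 := by
        rw [sq]
        exact mul_le_mul' (setLIntegral_le_lintegral _ _) (setLIntegral_le_lintegral _ _)

lemma ofReal_mul_lintegral_mul_sub_le (hf : IsLogConcave f) (hf0 : ∀ x, 0 ≤ f x)
    (hmeas : Measurable f) (s : ℝ) :
    ENNReal.ofReal (f s) * ∫⁻ x, ENNReal.ofReal ((x - s) * f x)
      ≤ (∫⁻ x, ENNReal.ofReal (f x)) ^ 2 := by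
  have hmirror := hf.comp_neg.ofReal_mul_lintegral_sub_mul_le (fun x => hf0 _)
    (hmeas.comp measurable_neg) (-s)
  rw [← lintegral_neg_eq_self]
  simp only [neg_neg, lintegral_neg_eq_self (fun x => ENNReal.ofReal (f x))] at hmirror
  convert hmirror using 6 with x
  ring

lemma integrable_sub_mul (hf : IsLogConcave f) (hf0 : ∀ x, 0 ≤ f x) (hmeas : Measurable f)
    (hmass : ∫⁻ x, ENNReal.ofReal (f x) ≠ ∞) {s : ℝ} (hs : 0 < f s) :
    Integrable fun x => (s - x) * f x := by
  have hfs : ENNReal.ofReal (f s) ≠ 0 := (ENNReal.ofReal_pos.2 hs).ne'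
  have hfin : ∀ {A : ℝ≥0∞}, ENNReal.ofReal (f s) * A ≤ (∫⁻ x, ENNReal.ofReal (f x)) ^ 2 →
      A ≠ ∞ := fun hA =>
    (ENNReal.lt_top_of_mul_ne_top_right (ne_top_of_le_ne_top (ENNReal.pow_ne_top hmass) hA)
      hfs).ne
  refine integrable_of_lintegral_ofReal_ne_top (by fun_prop)
    (hfin (hf.ofReal_mul_lintegral_sub_mul_le hf0 hmeas s)) ?_
  simp_rw [← neg_mul, neg_sub]
  exact hfin (hf.ofReal_mul_lintegral_mul_sub_le hf0 hmeas s)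

lemma ofReal_mul_abs_integral_sub_mul_le (hf : IsLogConcave f) (hf0 : ∀ x, 0 ≤ f x)
    (hmeas : Measurable f) (s : ℝ) :
    ENNReal.ofReal (f s * |∫ x, (s - x) * f x|) ≤ (∫⁻ x, ENNReal.ofReal (f x)) ^ 2 := by
  by_cases hint : Integrable fun x => (s - x) * f x
  · rw [ENNReal.ofReal_mul (hf0 s)]
    calc ENNReal.ofReal (f s) * ENNReal.ofReal |∫ x, (s - x) * f x|
        ≤ ENNReal.ofReal (f s) * max (∫⁻ x, ENNReal.ofReal ((s - x) * f x))
            (∫⁻ x, ENNReal.ofReal (-((s - x) * f x))) := by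
          gcongr; exact ofReal_abs_integral_le_max hint
      _ = max (ENNReal.ofReal (f s) * ∫⁻ x, ENNReal.ofReal ((s - x) * f x))
            (ENNReal.ofReal (f s) * ∫⁻ x, ENNReal.ofReal (-((s - x) * f x))) := mul_max _ _ _
      _ ≤ (∫⁻ x, ENNReal.ofReal (f x)) ^ 2 := by
          refine max_le (hf.ofReal_mul_lintegral_sub_mul_le hf0 hmeas s) ?_
          simp_rw [← neg_mul, neg_sub]
          exact hf.ofReal_mul_lintegral_mul_sub_le hf0 hmeas s
  · simp [integral_undef hint]

end IsLogConcave

/-- For every nonzero real `x₀` and every upper semi-continuous log-concave probability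
density `f` on `ℝ` with mean zero, `f x₀ ≤ 1 / |x₀|`. -/
theorem logconcave_mean_zero_envelope
    (f : ℝ → ℝ)
    (hf_nonneg : ∀ x, 0 ≤ f x)
    (hf_usc : UpperSemicontinuous f)
    (hf_lc : ∀ x y a b : ℝ, 0 ≤ a → 0 ≤ b → a + b = 1 →
      f x ^ a * f y ^ b ≤ f (a * x + b * y))
    (hf_int : ∫ x, f x = 1)
    (hf_mean : ∫ x, x * f x = 0)
    (x₀ : ℝ) (hx₀ : x₀ ≠ 0) :
    f x₀ ≤ 1 / |x₀| := by
  have hlc : IsLogConcave f := hf_lc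
  have hmeas : Measurable f := hf_usc.measurable
  have hf : Integrable f := .of_integral_ne_zero (by simp [hf_int])
  have hmass : ∫⁻ x, ENNReal.ofReal (f x) = 1 := by
    rw [← ofReal_integral_eq_lintegral_ofReal hf (ae_of_all _ hf_nonneg), hf_int,
      ENNReal.ofReal_one]
  rcases (hf_nonneg x₀).eq_or_lt with h0 | hpos
  · rw [← h0]; positivity
  have hg := hlc.integrable_sub_mul hf_nonneg hmeas (by simp [hmass]) hpos
  have hxf : Integrable fun x => x * f x :=
    ((hf.const_mul x₀).sub hg).congr (ae_of_all _ fun x => by simp only [Pi.sub_apply]; ring)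
  have hg_int : ∫ x, (x₀ - x) * f x = x₀ := by
    simp_rw [sub_mul]
    rw [integral_sub (hf.const_mul x₀) hxf, integral_const_mul, hf_int, hf_mean, mul_one,
      sub_zero]
  have key := hlc.ofReal_mul_abs_integral_sub_mul_le hf_nonneg hmeas x₀
  rw [hg_int, hmass, one_pow, ENNReal.ofReal_le_one] at key
  rwa [le_div_iff₀ (abs_pos.2 hx₀)]
end

section
/- Suppose f : ℝ^d → [0,∞) is an upper semi-continuous log-concave probability density such that for some ε ∈ (0,1), the Lebesgue measure of the super-level set {x : f(x) ≥ ε} is at least ε. Then sup_x f(x) ≤ exp(max{2 + 2·log(1/ε), 4d²}). -/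
open MeasureTheory Real ENNReal

lemma aux_exp (n : ℕ) (hn : 2 ≤ n) : 3 * (n:ℝ) ≤ Real.exp n := by
  induction n with
  | zero => omega
  | succ m ih =>
    rcases Nat.lt_or_ge m 2 with hm | hm
    · interval_cases m
      · omega
      · have h := Real.exp_one_gt_d9
        have : Real.exp 2 = Real.exp 1 * Real.exp 1 := by
          rw [← Real.exp_add]; norm_num
        push_cast
        nlinarith
    · have h1 := ih (by omega)
      have h2 : Real.exp ((m:ℝ) + 1) = Real.exp m * Real.exp 1 := by
        rw [← Real.exp_add]
      have h3 : (2:ℝ) ≤ Real.exp 1 := by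
        have := Real.exp_one_gt_d9; linarith
      have hm' : (2:ℝ) ≤ (m:ℝ) := by exact_mod_cast hm
      push_cast
      rw [h2]
      nlinarith

lemma aux_log3 : Real.log 3 ≤ 4/3 := by
  rw [Real.log_le_iff_le_exp (by norm_num)]
  have h1 : Real.exp (4/3 : ℝ) = Real.exp 1 * Real.exp (1/3) := by
    rw [← Real.exp_add]; norm_num
  have h2 := Real.exp_one_gt_d9
  have h3 : (1/3 : ℝ) + 1 ≤ Real.exp (1/3) := Real.add_one_le_exp _
  nlinarith

lemma aux_logd (d : ℕ) (hd : 2 ≤ d) : Real.log (3*(d:ℝ)) ≤ d := by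
  rw [Real.log_le_iff_le_exp (by positivity)]
  exact aux_exp d hd

lemma key_ineq (d : ℕ) (hd : 1 ≤ d) (L : ℝ) (hL : 0 ≤ L) :
    (1 + 1/(3*(d:ℝ))) * L + d * Real.log (3*(d:ℝ)) ≤
      (1 - 1/(3*(d:ℝ))) * max (2 + 2*L) (4*(d:ℝ)^2) := by
  have hu : (1:ℝ) ≤ (d:ℝ) := by exact_mod_cast hd
  set u := (d:ℝ) with hu_def
  have h3u : (0:ℝ) < 3*u := by linarith
  have hv1 : (1/(3*u)) * (3*u) = 1 := by field_simp
  have hv0 : 0 < 1/(3*u) := by positivity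
  have hv3 : 1/(3*u) ≤ 1/3 := by
    rw [div_le_div_iff₀ h3u (by norm_num)]; linarith
  rcases Nat.lt_or_ge d 2 with hd2 | hd2
  · have hdd : d = 1 := by omega
    subst hdd
    simp only [Nat.cast_one, hu_def] at *
    norm_num
    have hlog3 := aux_log3
    rcases le_total L 1 with hL1 | hL1
    · have hmax : (4:ℝ) ≤ max (2 + 2*L) 4 := le_max_right _ _
      nlinarith [hmax]
    · have hmax : (2 + 2*L:ℝ) ≤ max (2 + 2*L) 4 := le_max_left _ _
      nlinarith [hmax]
  · have hu2 : (2:ℝ) ≤ u := by rw [hu_def]; exact_mod_cast hd2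
    have hlog : Real.log (3*u) ≤ u := aux_logd d hd2
    have hlognn : 0 ≤ Real.log (3*u) := Real.log_nonneg (by linarith)
    rcases le_total L (2*u^2 - 1) with h | h
    · have hmax : (4*u^2:ℝ) ≤ max (2 + 2*L) (4*u^2) := le_max_right _ _
      have h1 : (1 - 1/(3*u)) * (4*u^2) ≤ (1 - 1/(3*u)) * max (2 + 2*L) (4*u^2) :=
        mul_le_mul_of_nonneg_left hmax (by linarith)
      refine le_trans ?_ h1
      nlinarith [sq_nonneg (u-1), mul_pos hv0 (by linarith : (0:ℝ) < u),
        mul_le_mul_of_nonneg_right hlog (by linarith : (0:ℝ) ≤ u),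
        mul_le_mul_of_nonneg_left h (by linarith : (0:ℝ) ≤ 1 + 1/(3*u))]
    · have hmax : (2 + 2*L:ℝ) ≤ max (2 + 2*L) (4*u^2) := le_max_left _ _
      have h1 : (1 - 1/(3*u)) * (2 + 2*L) ≤ (1 - 1/(3*u)) * max (2 + 2*L) (4*u^2) :=
        mul_le_mul_of_nonneg_left hmax (by linarith)
      refine le_trans ?_ h1
      have h13 : 1/(3*u) * u = 1/3 := by field_simp
      nlinarith [sq_nonneg (u-1), mul_le_mul_of_nonneg_right hlog (by linarith : (0:ℝ) ≤ u),
        mul_le_mul_of_nonneg_left h (by positivity : (0:ℝ) ≤ 1/(3*u)),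
        mul_le_mul_of_nonneg_right h (by linarith : (0:ℝ) ≤ 1 - 3*(1/(3*u)))]


/-- If `f` is an upper semi-continuous log-concave probability density on `ℝ^d` whose
super-level set `{x : f x ≥ ε}` has Lebesgue measure at least `ε` for some `ε ∈ (0,1)`,
then `sup f ≤ exp(max{2 + 2 log(1/ε), 4 d²})`. -/
theorem logconcave_sup_bound {d : ℕ} (f : EuclideanSpace ℝ (Fin d) → ℝ)
    (hf_nonneg : ∀ x, 0 ≤ f x)
    (hf_usc : UpperSemicontinuous f)
    (hf_lc : ∀ x y : EuclideanSpace ℝ (Fin d), ∀ a b : ℝ, 0 ≤ a → 0 ≤ b → a + b = 1 →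
      f x ^ a * f y ^ b ≤ f (a • x + b • y))
    (hf_int : ∫ x, f x = 1)
    (ε : ℝ) (hε0 : 0 < ε) (hε1 : ε < 1)
    (hlevel : ENNReal.ofReal ε ≤ MeasureTheory.volume {x | ε ≤ f x}) :
    ∀ x, f x ≤ Real.exp (max (2 + 2 * Real.log (1 / ε)) (4 * (d : ℝ) ^ 2)) := by
  intro x₀
  have hL : 0 < Real.log (1/ε) := Real.log_pos (by rw [lt_div_iff₀ hε0]; linarith)
  set L := Real.log (1/ε) with hLdef
  set T := max (2 + 2 * L) (4 * (d : ℝ) ^ 2) with hTdef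
  have hT0 : 0 < T := lt_of_lt_of_le (by linarith) (le_max_left _ _)
  by_cases hM1 : f x₀ ≤ 1
  · exact hM1.trans (Real.one_le_exp hT0.le)
  push_neg at hM1
  have hM0 : 0 < f x₀ := lt_trans one_pos hM1
  -- measurability and integrability
  have hfm : Measurable f := hf_usc.measurable
  have hint : Integrable f := by
    by_contra h
    rw [integral_undef h] at hf_int; norm_num at hf_int
  have hlint : ∫⁻ x, ENNReal.ofReal (f x) = 1 := by
    rw [← ofReal_integral_eq_lintegral_ofReal hint
      (Filter.Eventually.of_forall hf_nonneg), hf_int, ENNReal.ofReal_one]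
  set A := {x | ε ≤ f x} with hAdef
  have hA : MeasurableSet A := hfm measurableSet_Ici
  -- the dilation parameter
  set D : ℝ := max (d:ℝ) 1 with hDdef
  have hD1 : (1:ℝ) ≤ D := le_max_right _ _
  set t : ℝ := 1/(3*D) with htdef
  have ht0 : 0 < t := by positivity
  have ht3 : t ≤ 1/3 := by
    rw [htdef, div_le_div_iff₀ (by linarith) (by norm_num)]; linarith
  have ht1 : t < 1 := by linarith
  set c : ℝ := (f x₀)^(1-t) * ε^t with hcdef
  have hc0 : 0 < c := by
    apply _root_.mul_pos <;> apply Real.rpow_pos_of_pos <;> assumption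
  set S := AffineMap.homothety x₀ t '' A with hSdef
  -- lower bound for f on S
  have hSsub : ∀ z ∈ S, c ≤ f z := by
    rintro z ⟨y, hy, rfl⟩
    have hy' : ε ≤ f y := hy
    have heq : AffineMap.homothety x₀ t y = t • y + (1-t) • x₀ := by
      simp only [AffineMap.homothety_apply, vsub_eq_sub, vadd_eq_add]
      module
    rw [heq]
    refine le_trans ?_ (hf_lc y x₀ t (1-t) ht0.le (by linarith) (by ring))
    rw [hcdef, mul_comm]
    exact mul_le_mul_of_nonneg_right
      (Real.rpow_le_rpow hε0.le hy' ht0.le)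
      (Real.rpow_nonneg hM0.le _)
  -- measurability of S
  have hS : MeasurableSet S := by
    have hgm : Measurable (fun z : EuclideanSpace ℝ (Fin d) => t⁻¹ • (z - x₀) + x₀) := by
      fun_prop
    have hSeq : S = (fun z : EuclideanSpace ℝ (Fin d) => t⁻¹ • (z - x₀) + x₀) ⁻¹' A := by
      ext z
      constructor
      · rintro ⟨y, hy, rfl⟩
        have : t⁻¹ • (AffineMap.homothety x₀ t y - x₀) + x₀ = y := by
          simp only [AffineMap.homothety_apply, vsub_eq_sub, vadd_eq_add]
          rw [add_sub_cancel_right, smul_smul, inv_mul_cancel₀ ht0.ne', one_smul]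
          abel
        simpa [this] using hy
      · intro hz
        refine ⟨t⁻¹ • (z - x₀) + x₀, hz, ?_⟩
        simp only [AffineMap.homothety_apply, vsub_eq_sub, vadd_eq_add]
        rw [add_sub_cancel_right, smul_smul, mul_inv_cancel₀ ht0.ne', one_smul]
        abel
    rw [hSeq]
    exact hgm hA
  -- volume of S
  have hvolS : volume S = ENNReal.ofReal (t^d) * volume A := by
    rw [hSdef, Measure.addHaar_image_homothety, finrank_euclideanSpace_fin,
      abs_of_nonneg (by positivity)]
  -- main chain
  have hchain : ENNReal.ofReal c * volume S ≤ 1 := by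
    calc ENNReal.ofReal c * volume S = ∫⁻ _ in S, ENNReal.ofReal c := (setLIntegral_const S _).symm
      _ ≤ ∫⁻ x in S, ENNReal.ofReal (f x) :=
          setLIntegral_mono hfm.ennreal_ofReal (fun x hx => ENNReal.ofReal_le_ofReal (hSsub x hx))
      _ ≤ ∫⁻ x, ENNReal.ofReal (f x) := setLIntegral_le_lintegral _ _
      _ = 1 := hlint
  have hkey : ENNReal.ofReal (c * (t^d * ε)) ≤ 1 := by
    rw [ENNReal.ofReal_mul hc0.le, ENNReal.ofReal_mul (p := t^d) (by positivity)]
    calc ENNReal.ofReal c * (ENNReal.ofReal (t^d) * ENNReal.ofReal ε)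
        ≤ ENNReal.ofReal c * (ENNReal.ofReal (t^d) * volume A) := by gcongr
      _ = ENNReal.ofReal c * volume S := by rw [hvolS]
      _ ≤ 1 := hchain
  have hreal : c * (t^d * ε) ≤ 1 := ENNReal.ofReal_le_one.mp hkey
  -- take logarithms
  have hlogle : Real.log (c * (t^d * ε)) ≤ 0 :=
    Real.log_nonpos (by positivity) hreal
  have hexpand : Real.log (c * (t^d * ε)) =
      (1-t) * Real.log (f x₀) + t * Real.log ε + (d * Real.log t + Real.log ε) := by
    rw [hcdef, Real.log_mul (by positivity) (by positivity),
      Real.log_mul (by positivity) (by positivity),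
      Real.log_mul (by positivity) hε0.ne',
      Real.log_rpow hM0, Real.log_rpow hε0, Real.log_pow]
  have hlogeps : Real.log ε = -L := by
    rw [hLdef, one_div, Real.log_inv, neg_neg]
  have hlogt : Real.log t = -Real.log (3*D) := by
    rw [htdef, one_div, Real.log_inv]
  have hmain : (1-t) * Real.log (f x₀) ≤ (1+t) * L + d * Real.log (3*D) := by
    rw [hexpand, hlogeps, hlogt] at hlogle
    nlinarith [hlogle]
  have hkey2 : (1+t) * L + d * Real.log (3*D) ≤ (1-t) * T := by
    rcases Nat.eq_zero_or_pos d with h0 | h1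
    · subst h0
      have hDeq : D = 1 := by rw [hDdef]; simp
      have hteq : t = 1/3 := by rw [htdef, hDeq]; norm_num
      rw [hteq]
      have : (2 + 2*L : ℝ) ≤ T := le_max_left _ _
      push_cast
      linarith
    · have hDeq : D = (d:ℝ) := by
        rw [hDdef]; exact max_eq_left (by exact_mod_cast h1)
      have hteq : t = 1/(3*(d:ℝ)) := by rw [htdef, hDeq]
      rw [hteq, hDeq, hTdef]
      exact key_ineq d h1 L hL.le
  have hfinal : Real.log (f x₀) ≤ T :=
    le_of_mul_le_mul_left (by calc (1-t) * Real.log (f x₀) ≤ (1+t)*L + d * Real.log (3*D) := hmain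
      _ ≤ (1-t) * T := hkey2) (by linarith : (0:ℝ) < 1 - t)
  calc f x₀ = Real.exp (Real.log (f x₀)) := (Real.exp_log hM0).symm
    _ ≤ Real.exp T := Real.exp_le_exp.mpr hfinal
end

section
/- Let f : ℝ → [0,∞) be an upper semi-continuous log-concave probability density supported in (-∞, a] for some a > 0, with mean zero and variance one. Then a > 1/4. -/
/-!
Compare `f` with the reflected exponential density `g x = a⁻¹ exp ((x - a) / a)` on `(-∞, a]`,
which has the same mass and mean as `f` and second moment `a²`. As `log f` is concave and `log g`
is affine where `f` can be positive, `{g < f}` is an interval `I`, so `(x - inf I)(x - sup I)(f - g)`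
is nonpositive; since `f - g` has vanishing zeroth and first moments, its integral is
`∫ x² (f - g) = 1 - a²`. (If `I` is unbounded below, `(sup I - x)(f - g) ≥ 0` has integral zero,
which forces `∫ x² (f - g) = 0`.) Hence `a ≥ 1`.
-/

open MeasureTheory Real Set

section SignChange

variable {μ : Measure ℝ} {h : ℝ → ℝ}

theorem Integrable.mul_of_sq_mul {f : ℝ → ℝ} (hf : Integrable f μ)
    (hf₂ : Integrable (fun x => x ^ 2 * f x) μ) : Integrable (fun x => x * f x) μ := by
  refine (hf.norm.add hf₂.norm).mono' (aestronglyMeasurable_id.mul hf.1) (.of_forall fun x => ?_)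
  have habs : |x| ≤ 1 + x ^ 2 := by nlinarith [sq_abs x, abs_nonneg x]
  simp only [Pi.add_apply, norm_mul, norm_pow, Real.norm_eq_abs, sq_abs]
  nlinarith [abs_nonneg (f x)]

theorem integral_sub_mul_sub_mul_eq (h₀ : Integrable h μ) (h₁ : Integrable (fun x => x * h x) μ)
    (h₂ : Integrable (fun x => x ^ 2 * h x) μ) (hm₀ : ∫ x, h x ∂μ = 0)
    (hm₁ : ∫ x, x * h x ∂μ = 0) (c₁ c₂ : ℝ) :
    ∫ x, (x - c₁) * (x - c₂) * h x ∂μ = ∫ x, x ^ 2 * h x ∂μ := by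
  have hexp : ∀ x, (x - c₁) * (x - c₂) * h x
      = (x ^ 2 * h x - (c₁ + c₂) * (x * h x)) + c₁ * c₂ * h x := fun x => by ring
  have h₂₁ : Integrable (fun x => x ^ 2 * h x - (c₁ + c₂) * (x * h x)) μ :=
    h₂.sub (h₁.const_mul _)
  simp_rw [hexp]
  rw [integral_add h₂₁ (h₀.const_mul _), integral_sub h₂ (h₁.const_mul _),
    integral_const_mul, integral_const_mul, hm₀, hm₁]
  ring

theorem integral_sq_mul_nonpos_of_subset_Icc (h₀ : Integrable h μ)
    (h₁ : Integrable (fun x => x * h x) μ) (h₂ : Integrable (fun x => x ^ 2 * h x) μ)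
    (hm₀ : ∫ x, h x ∂μ = 0) (hm₁ : ∫ x, x * h x ∂μ = 0) {c₁ c₂ : ℝ} (hc : c₁ ≤ c₂)
    (hIoo : Ioo c₁ c₂ ⊆ {x | 0 < h x}) (hIcc : {x | 0 < h x} ⊆ Icc c₁ c₂) :
    ∫ x, x ^ 2 * h x ∂μ ≤ 0 := by
  rw [← integral_sub_mul_sub_mul_eq h₀ h₁ h₂ hm₀ hm₁ c₁ c₂]
  refine integral_nonpos fun x => ?_
  by_cases hx : 0 < h x
  · obtain ⟨h₁x, h₂x⟩ := hIcc hx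
    exact mul_nonpos_of_nonpos_of_nonneg
      (mul_nonpos_of_nonneg_of_nonpos (by linarith) (by linarith)) hx.le
  · have hout : x ≤ c₁ ∨ c₂ ≤ x := by
      by_contra! hin
      exact hx (hIoo hin)
    refine mul_nonpos_of_nonneg_of_nonpos ?_ (not_lt.1 hx)
    rcases hout with hout | hout <;> nlinarith

theorem integral_sq_mul_eq_zero_of_subset_Iic (h₀ : Integrable h μ)
    (h₁ : Integrable (fun x => x * h x) μ) (h₂ : Integrable (fun x => x ^ 2 * h x) μ)
    (hm₀ : ∫ x, h x ∂μ = 0) (hm₁ : ∫ x, x * h x ∂μ = 0) {c : ℝ}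
    (hIio : Iio c ⊆ {x | 0 < h x}) (hIic : {x | 0 < h x} ⊆ Iic c) :
    ∫ x, x ^ 2 * h x ∂μ = 0 := by
  have hsign : ∀ x, 0 ≤ (c - x) * h x := fun x => by
    by_cases hx : 0 < h x
    · exact mul_nonneg (sub_nonneg.2 (hIic hx)) hx.le
    · exact mul_nonneg_of_nonpos_of_nonpos
        (sub_nonpos.2 (not_lt.1 fun hxc => hx (hIio hxc))) (not_lt.1 hx)
  have hlin : ∀ x, (c - x) * h x = c * h x - x * h x := fun x => by ring
  have hint : Integrable (fun x => (c - x) * h x) μ := by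
    simp_rw [hlin]; exact (h₀.const_mul c).sub h₁
  have hzero : ∫ x, (c - x) * h x ∂μ = 0 := by
    simp_rw [hlin]
    rw [integral_sub (h₀.const_mul c) h₁, integral_const_mul, hm₀, hm₁]
    ring
  have hae : (fun x => (c - x) * h x) =ᵐ[μ] 0 :=
    (integral_eq_zero_iff_of_nonneg hsign hint).1 hzero
  -- `(x - c)² h x = (c - x) · (c - x) h x` vanishes a.e. together with `(c - x) h x`
  rw [← integral_sub_mul_sub_mul_eq h₀ h₁ h₂ hm₀ hm₁ c c, integral_eq_zero_of_ae]
  filter_upwards [hae] with x hx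
  simp only [Pi.zero_apply] at hx ⊢
  linear_combination (c - x) * hx

theorem integral_sq_mul_nonpos_of_convex (h₀ : Integrable h μ)
    (h₁ : Integrable (fun x => x * h x) μ) (h₂ : Integrable (fun x => x ^ 2 * h x) μ)
    (hm₀ : ∫ x, h x ∂μ = 0) (hm₁ : ∫ x, x * h x ∂μ = 0)
    (hconv : Convex ℝ {x | 0 < h x}) (hbdd : BddAbove {x | 0 < h x}) :
    ∫ x, x ^ 2 * h x ∂μ ≤ 0 := by
  set U := {x | 0 < h x}
  rcases U.eq_empty_or_nonempty with hU | hU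
  · refine integral_nonpos fun x => mul_nonpos_of_nonneg_of_nonpos (sq_nonneg x) ?_
    exact not_lt.1 fun hx => hU.subset hx
  by_cases hbelow : BddBelow U
  · exact integral_sq_mul_nonpos_of_subset_Icc h₀ h₁ h₂ hm₀ hm₁
      (csInf_le_csSup hU hbelow hbdd)
      (IsConnected.Ioo_csInf_csSup_subset ⟨hU, hconv.isPreconnected⟩ hbelow hbdd)
      (subset_Icc_csInf_csSup hbelow hbdd)
  · exact (integral_sq_mul_eq_zero_of_subset_Iic h₀ h₁ h₂ hm₀ hm₁
      (hconv.isPreconnected.Iio_csSup_subset hbelow hbdd) fun _ hx => le_csSup hbdd hx).le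

theorem integral_sq_mul_le_of_convex {f g : ℝ → ℝ} (hf₀ : Integrable f μ) (hg₀ : Integrable g μ)
    (hf₁ : Integrable (fun x => x * f x) μ) (hg₁ : Integrable (fun x => x * g x) μ)
    (hf₂ : Integrable (fun x => x ^ 2 * f x) μ) (hg₂ : Integrable (fun x => x ^ 2 * g x) μ)
    (hm₀ : ∫ x, f x ∂μ = ∫ x, g x ∂μ) (hm₁ : ∫ x, x * f x ∂μ = ∫ x, x * g x ∂μ)
    (hconv : Convex ℝ {x | g x < f x}) (hbdd : BddAbove {x | g x < f x}) :
    ∫ x, x ^ 2 * f x ∂μ ≤ ∫ x, x ^ 2 * g x ∂μ := by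
  have key := integral_sq_mul_nonpos_of_convex (h := fun x => f x - g x) (hf₀.sub hg₀)
    (by simp only [mul_sub]; exact hf₁.sub hg₁) (by simp only [mul_sub]; exact hf₂.sub hg₂)
    (by rw [integral_sub hf₀ hg₀, hm₀, sub_self])
    (by simp only [mul_sub]; rw [integral_sub hf₁ hg₁, hm₁, sub_self])
    (by simpa only [sub_pos] using hconv) (by simpa only [sub_pos] using hbdd)
  simp only [mul_sub] at key
  rwa [integral_sub hf₂ hg₂, sub_nonpos] at key

end SignChange

theorem convex_setOf_lt_of_logConcave {f g : ℝ → ℝ}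
    (hf : ∀ x y a b : ℝ, 0 ≤ a → 0 ≤ b → a + b = 1 → f x ^ a * f y ^ b ≤ f (a * x + b * y))
    (hg_nonneg : ∀ x, 0 ≤ g x)
    (hg : ∀ x y a b : ℝ, 0 ≤ a → 0 ≤ b → a + b = 1 → g (a * x + b * y) ≤ g x ^ a * g y ^ b) :
    Convex ℝ {x | g x < f x} := by
  refine convex_iff_forall_pos.2 fun x hx y hy a b ha hb hab => ?_
  calc g (a * x + b * y) ≤ g x ^ a * g y ^ b := hg x y a b ha.le hb.le hab
    _ < f x ^ a * f y ^ b :=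
      mul_lt_mul'' (rpow_lt_rpow (hg_nonneg x) hx ha) (rpow_lt_rpow (hg_nonneg y) hy hb)
        (rpow_nonneg (hg_nonneg x) a) (rpow_nonneg (hg_nonneg y) b)
    _ ≤ f (a * x + b * y) := hf x y a b ha.le hb.le hab

theorem exp_affine_comb_eq (α β x y a b : ℝ) (hab : a + b = 1) :
    exp (α * (a * x + b * y) + β) = exp (α * x + β) ^ a * exp (α * y + β) ^ b := by
  rw [← exp_mul, ← exp_mul, ← exp_add]
  congr 1
  linear_combination (-β) * hab

theorem integrableOn_pow_mul_exp_neg_Ioi (n : ℕ) :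
    IntegrableOn (fun t : ℝ => t ^ n * exp (-t)) (Ioi 0) := by
  refine (GammaIntegral_convergent (Nat.cast_add_one_pos n)).congr_fun (fun t _ => ?_)
    measurableSet_Ioi
  dsimp only
  rw [add_sub_cancel_right, rpow_natCast, mul_comm]

theorem integral_pow_mul_exp_neg_Ioi (n : ℕ) :
    ∫ t in Ioi (0 : ℝ), t ^ n * exp (-t) = n.factorial := by
  rw [← Gamma_nat_eq_factorial, Gamma_eq_integral (Nat.cast_add_one_pos n)]
  refine setIntegral_congr_fun measurableSet_Ioi fun t _ => ?_
  rw [add_sub_cancel_right, rpow_natCast, mul_comm]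

theorem integrableOn_quadratic_mul_exp_neg_Ioi (p q r : ℝ) :
    IntegrableOn (fun t : ℝ => (p + q * t + r * t ^ 2) * exp (-t)) (Ioi 0) := by
  refine IntegrableOn.congr_fun ((((integrableOn_pow_mul_exp_neg_Ioi 0).const_mul p).add
      ((integrableOn_pow_mul_exp_neg_Ioi 1).const_mul q)).add
      ((integrableOn_pow_mul_exp_neg_Ioi 2).const_mul r)) (fun t _ => ?_) measurableSet_Ioi
  simp only [Pi.add_apply]
  ring

theorem integral_quadratic_mul_exp_neg_Ioi (p q r : ℝ) :
    ∫ t in Ioi (0 : ℝ), (p + q * t + r * t ^ 2) * exp (-t) = p + q + 2 * r := by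
  have hsplit : ∀ t : ℝ, (p + q * t + r * t ^ 2) * exp (-t)
      = p * (t ^ 0 * exp (-t)) + q * (t ^ 1 * exp (-t)) + r * (t ^ 2 * exp (-t)) :=
    fun t => by ring
  have hint := fun n => (integrableOn_pow_mul_exp_neg_Ioi n).const_mul
  have hpq : IntegrableOn (fun t : ℝ => p * (t ^ 0 * exp (-t)) + q * (t ^ 1 * exp (-t))) (Ioi 0) :=
    (hint 0 p).add (hint 1 q)
  simp_rw [hsplit]
  rw [integral_add hpq (hint 2 r), integral_add (hint 0 p) (hint 1 q),
    integral_const_mul, integral_const_mul, integral_const_mul, integral_pow_mul_exp_neg_Ioi,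
    integral_pow_mul_exp_neg_Ioi, integral_pow_mul_exp_neg_Ioi]
  norm_num [Nat.factorial]
  ring


noncomputable def reflExpDensity (a : ℝ) : ℝ → ℝ :=
  (Iic a).indicator fun x => a⁻¹ * exp ((x - a) / a)

section ReflExpDensity

variable {a : ℝ}

theorem reflExpDensity_nonneg (ha : 0 < a) (x : ℝ) : 0 ≤ reflExpDensity a x :=
  indicator_nonneg (fun _ _ => mul_nonneg (inv_nonneg.2 ha.le) (exp_pos _).le) x

theorem mul_reflExpDensity_eq (ha : 0 < a) (φ : ℝ → ℝ) (x : ℝ) :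
    φ x * reflExpDensity a x
      = a⁻¹ * (Ici 0).indicator (fun t => φ (a - a * t) * exp (-t)) (a⁻¹ * (a - x)) := by
  rcases le_or_gt x a with hx | hx
  · have ht : a⁻¹ * (a - x) ∈ Ici 0 := mul_nonneg (inv_nonneg.2 ha.le) (sub_nonneg.2 hx)
    have hφ : a - a * (a⁻¹ * (a - x)) = x := by field_simp; ring
    have hexp : -(a⁻¹ * (a - x)) = (x - a) / a := by field_simp; ring
    rw [reflExpDensity, indicator_of_mem (mem_Iic.2 hx), indicator_of_mem ht, hφ, hexp]
    ring
  · have ht : a⁻¹ * (a - x) ∉ Ici 0 :=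
      not_le.2 (mul_neg_of_pos_of_neg (inv_pos.2 ha) (sub_neg.2 hx))
    rw [reflExpDensity, indicator_of_notMem (notMem_Iic.2 hx), indicator_of_notMem ht, mul_zero,
      mul_zero]

theorem integrable_mul_reflExpDensity_of_integrableOn (ha : 0 < a) {φ : ℝ → ℝ}
    (hφ : IntegrableOn (fun t => φ (a - a * t) * exp (-t)) (Ioi 0)) :
    Integrable (fun x => φ x * reflExpDensity a x) := by
  have hD : Integrable ((Ici 0).indicator fun t => φ (a - a * t) * exp (-t)) :=
    (integrable_indicator_iff measurableSet_Ici).2 ((integrableOn_Ici_iff_integrableOn_Ioi).2 hφ)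
  simp_rw [mul_reflExpDensity_eq ha]
  exact ((hD.comp_mul_left' (inv_ne_zero ha.ne')).comp_sub_left a).const_mul a⁻¹

theorem integral_mul_reflExpDensity_eq_setIntegral (ha : 0 < a) (φ : ℝ → ℝ) :
    ∫ x, φ x * reflExpDensity a x = ∫ t in Ioi 0, φ (a - a * t) * exp (-t) := by
  set D := (Ici 0).indicator fun t => φ (a - a * t) * exp (-t)
  simp_rw [mul_reflExpDensity_eq ha]
  rw [integral_const_mul, integral_sub_left_eq_self (fun y => D (a⁻¹ * y)) volume a,
    Measure.integral_comp_inv_mul_left, abs_of_pos ha, smul_eq_mul,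
    integral_indicator measurableSet_Ici, integral_Ici_eq_integral_Ioi, inv_mul_cancel_left₀ ha.ne']

theorem integrable_quadratic_mul_reflExpDensity (ha : 0 < a) (p q r : ℝ) :
    Integrable (fun x => (p + q * x + r * x ^ 2) * reflExpDensity a x) := by
  refine integrable_mul_reflExpDensity_of_integrableOn ha ?_
  convert integrableOn_quadratic_mul_exp_neg_Ioi (p + q * a + r * a ^ 2)
    (-(q * a) - 2 * r * a ^ 2) (r * a ^ 2) using 3 with t
  ring

theorem integral_quadratic_mul_reflExpDensity (ha : 0 < a) (p q r : ℝ) :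
    ∫ x, (p + q * x + r * x ^ 2) * reflExpDensity a x = p + r * a ^ 2 := by
  rw [integral_mul_reflExpDensity_eq_setIntegral ha fun x => p + q * x + r * x ^ 2]
  convert integral_quadratic_mul_exp_neg_Ioi (p + q * a + r * a ^ 2)
    (-(q * a) - 2 * r * a ^ 2) (r * a ^ 2) using 1
  · congr with t
    ring
  · ring

theorem integrable_reflExpDensity (ha : 0 < a) : Integrable (reflExpDensity a) := by
  simpa using integrable_quadratic_mul_reflExpDensity ha 1 0 0

theorem integrable_mul_reflExpDensity (ha : 0 < a) :
    Integrable (fun x => x * reflExpDensity a x) := by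
  simpa using integrable_quadratic_mul_reflExpDensity ha 0 1 0

theorem integrable_sq_mul_reflExpDensity (ha : 0 < a) :
    Integrable (fun x => x ^ 2 * reflExpDensity a x) := by
  simpa using integrable_quadratic_mul_reflExpDensity ha 0 0 1

theorem integral_reflExpDensity (ha : 0 < a) : ∫ x, reflExpDensity a x = 1 := by
  simpa using integral_quadratic_mul_reflExpDensity ha 1 0 0

theorem integral_mul_reflExpDensity (ha : 0 < a) : ∫ x, x * reflExpDensity a x = 0 := by
  simpa using integral_quadratic_mul_reflExpDensity ha 0 1 0

theorem integral_sq_mul_reflExpDensity (ha : 0 < a) :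
    ∫ x, x ^ 2 * reflExpDensity a x = a ^ 2 := by
  simpa using integral_quadratic_mul_reflExpDensity ha 0 0 1

theorem convex_setOf_reflExpDensity_lt (ha : 0 < a) {f : ℝ → ℝ}
    (hf : ∀ x y a b : ℝ, 0 ≤ a → 0 ≤ b → a + b = 1 → f x ^ a * f y ^ b ≤ f (a * x + b * y))
    (hf_supp : ∀ x, a < x → f x = 0) :
    Convex ℝ {x | reflExpDensity a x < f x} := by
  have hexp : ∀ x, a⁻¹ * exp ((x - a) / a) = exp (a⁻¹ * x + (-1 - log a)) := fun x => by
    rw [show a⁻¹ * x + (-1 - log a) = (x - a) / a + -log a by field_simp; ring, exp_add,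
      exp_neg, exp_log ha, mul_comm]
  have hset : {x | reflExpDensity a x < f x} = {x | exp (a⁻¹ * x + (-1 - log a)) < f x} := by
    ext x
    rcases le_or_gt x a with hx | hx
    · simp only [mem_ofPred_eq, reflExpDensity, indicator_of_mem (mem_Iic.2 hx), hexp]
    · simp only [mem_ofPred_eq, reflExpDensity, indicator_of_notMem (notMem_Iic.2 hx), hf_supp x hx,
        lt_irrefl, false_iff, not_lt]
      exact (exp_pos _).le
  rw [hset]
  exact convex_setOf_lt_of_logConcave hf (fun _ => (exp_pos _).le)
    fun x y s t _ _ hst => (exp_affine_comb_eq _ _ x y s t hst).le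

end ReflExpDensity

theorem logconcave_support_bound_general (f : ℝ → ℝ) (a : ℝ) (ha : 0 < a)
    (hf_lc : ∀ x y a' b : ℝ, 0 ≤ a' → 0 ≤ b → a' + b = 1 →
      f x ^ a' * f y ^ b ≤ f (a' * x + b * y))
    (hf_int : ∫ x, f x = 1)
    (hf_mean : ∫ x, x * f x = 0)
    (hf_var : ∫ x, x ^ 2 * f x = 1)
    (hf_supp : ∀ x, a < x → f x = 0) :
    1 / 4 < a := by
  have hf : Integrable f := .of_integral_ne_zero (by rw [hf_int]; exact one_ne_zero)
  have hf₂ : Integrable (fun x => x ^ 2 * f x) :=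
    .of_integral_ne_zero (by rw [hf_var]; exact one_ne_zero)
  have hbdd : BddAbove {x | reflExpDensity a x < f x} :=
    ⟨a, fun x hx => not_lt.1 fun hax =>
      (hx.trans_eq (hf_supp x hax)).not_ge (reflExpDensity_nonneg ha x)⟩
  have hvar := integral_sq_mul_le_of_convex hf (integrable_reflExpDensity ha)
    (Integrable.mul_of_sq_mul hf hf₂) (integrable_mul_reflExpDensity ha) hf₂
    (integrable_sq_mul_reflExpDensity ha) (by rw [hf_int, integral_reflExpDensity ha])
    (by rw [hf_mean, integral_mul_reflExpDensity ha])
    (convex_setOf_reflExpDensity_lt ha hf_lc hf_supp) hbdd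
  rw [hf_var, integral_sq_mul_reflExpDensity ha] at hvar
  nlinarith

/-- If `f` is an upper semi-continuous log-concave probability density on `ℝ` supported in
`(-∞, a]` for some `a > 0`, with mean zero and variance one, then `a > 1/4`. -/
theorem logconcave_support_bound (f : ℝ → ℝ) (a : ℝ) (ha : 0 < a)
    (hf_nonneg : ∀ x, 0 ≤ f x)
    (hf_usc : UpperSemicontinuous f)
    (hf_lc : ∀ x y a' b : ℝ, 0 ≤ a' → 0 ≤ b → a' + b = 1 →
      f x ^ a' * f y ^ b ≤ f (a' * x + b * y))
    (hf_int : ∫ x, f x = 1)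
    (hf_mean : ∫ x, x * f x = 0)
    (hf_var : ∫ x, x ^ 2 * f x = 1)
    (hf_supp : ∀ x, a < x → f x = 0) :
    1 / 4 < a :=
  logconcave_support_bound_general f a ha hf_lc hf_int hf_mean hf_var hf_supp
end

section
/- Let ε ∈ (0, 1/2]. Then 2ε - (2/3)ε³ - 2(1-ε²)^{1/2}·arcsin(ε) ≥ (31/210)·ε⁵. -/
/-!
Write `A(x) = arcChordGap x = 2x - (2/3)x³ - 2√(1-x²) arcsin x`, so `A(0) = 0` and
`A'(x) = 2x (arcsin x / √(1-x²) - x)`. On `[0, 1)` the bounds `x ≤ arcsin x` and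
`√(1-x²) ≤ 1 - x²/2` give `arcsin x / √(1-x²) ≥ x + x³/2`, hence `A'(x) ≥ x⁴` and
`A(x) ≥ x⁵/5 ≥ (31/210) x⁵`.
-/

open Real Set

lemma Real.self_le_arcsin {x : ℝ} (hx₀ : 0 ≤ x) (hx₁ : x ≤ 1) : x ≤ arcsin x := by
  conv_lhs => rw [← sin_arcsin (by linarith) hx₁]
  exact sin_le (arcsin_nonneg.2 hx₀)

lemma Real.sqrt_one_sub_sq_le {x : ℝ} (hx : x ^ 2 ≤ 2) : √(1 - x ^ 2) ≤ 1 - x ^ 2 / 2 :=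
  sqrt_le_iff.2 ⟨by linarith, by nlinarith [sq_nonneg (x ^ 2)]⟩

lemma Real.self_add_pow_three_div_two_le_arcsin_div_sqrt {x : ℝ} (hx₀ : 0 ≤ x) (hx₁ : x < 1) :
    x + x ^ 3 / 2 ≤ arcsin x / √(1 - x ^ 2) := by
  have hsqrt_pos : 0 < √(1 - x ^ 2) := sqrt_pos.2 (by nlinarith)
  rw [le_div_iff₀ hsqrt_pos]
  calc (x + x ^ 3 / 2) * √(1 - x ^ 2)
      ≤ (x + x ^ 3 / 2) * (1 - x ^ 2 / 2) := by
        gcongr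
        exact sqrt_one_sub_sq_le (by nlinarith)
    _ ≤ x := by nlinarith [pow_nonneg hx₀ 5]
    _ ≤ arcsin x := self_le_arcsin hx₀ hx₁.le

noncomputable def arcChordGap (x : ℝ) : ℝ := 2 * x - 2 / 3 * x ^ 3 - 2 * √(1 - x ^ 2) * arcsin x

lemma hasDerivAt_arcChordGap {x : ℝ} (hx₀ : -1 < x) (hx₁ : x < 1) :
    HasDerivAt arcChordGap (2 * x * (arcsin x / √(1 - x ^ 2) - x)) x := by
  have hsqrt_ne : √(1 - x ^ 2) ≠ 0 := (sqrt_pos.2 (by nlinarith)).ne'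
  have hsqrt : HasDerivAt (fun y => √(1 - y ^ 2)) (-(2 * x) / (2 * √(1 - x ^ 2))) x := by
    simpa using ((hasDerivAt_pow 2 x).const_sub 1).sqrt (by nlinarith)
  refine ((((hasDerivAt_id x).const_mul 2).sub ((hasDerivAt_pow 3 x).const_mul (2 / 3))).sub
    ((hsqrt.const_mul 2).mul (hasDerivAt_arcsin hx₀.ne' hx₁.ne))).congr_deriv ?_
  field_simp
  ring

lemma pow_five_div_five_le_arcChordGap {x : ℝ} (hx₀ : 0 ≤ x) (hx₁ : x ≤ 1) :
    x ^ 5 / 5 ≤ arcChordGap x := by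
  let g : ℝ → ℝ := fun y => arcChordGap y - y ^ 5 / 5
  have hg : ∀ y ∈ Ioo (0 : ℝ) 1,
      HasDerivAt g (2 * y * (arcsin y / √(1 - y ^ 2) - y) - y ^ 4) y := fun y hy => by
    refine ((hasDerivAt_arcChordGap (by linarith [hy.1]) hy.2).sub
      ((hasDerivAt_pow 5 y).div_const 5)).congr_deriv ?_
    ring
  have hmono : MonotoneOn g (Icc 0 1) := by
    refine monotoneOn_of_deriv_nonneg (convex_Icc 0 1)
      (by simp only [g, arcChordGap]; fun_prop) ?_ ?_
    · rw [interior_Icc]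
      exact fun y hy => (hg y hy).differentiableAt.differentiableWithinAt
    · rw [interior_Icc]
      intro y hy
      have := self_add_pow_three_div_two_le_arcsin_div_sqrt hy.1.le hy.2
      rw [(hg y hy).deriv]
      nlinarith [hy.1]
  have := hmono (left_mem_Icc.2 zero_le_one) ⟨hx₀, hx₁⟩ hx₀
  simpa [g, arcChordGap] using this

/-- For `ε ∈ (0, 1/2]`, `2ε - (2/3)ε³ - 2(1-ε²)^{1/2}·arcsin ε ≥ (31/210)·ε⁵`. -/
theorem arc_chord_area_lower_bound (ε : ℝ) (hε0 : 0 < ε) (hε : ε ≤ 1 / 2) :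
    (31 / 210) * ε ^ 5 ≤
      2 * ε - (2 / 3) * ε ^ 3 - 2 * Real.sqrt (1 - ε ^ 2) * Real.arcsin ε := by
  calc (31 / 210) * ε ^ 5 ≤ ε ^ 5 / 5 := by nlinarith [pow_pos hε0 5]
    _ ≤ _ := pow_five_div_five_le_arcChordGap hε0.le (by linarith)
end

section
/- Let K ∈ ℕ and let {f_α : α ∈ {0,1}^K} be probability densities on ℝ^d such that for some γ > 0, h²(f_α, f_β) ≥ γ·‖α-β‖₀ for all α, β, and for some C ∈ (0,1), h²(f_α, f_β) ≤ C/n whenever ‖α-β‖₀ = 1. Then for any estimator f̃_n based on an i.i.d. sample of size n, sup_α E_{f_α}[h²(f̃_n, f_α)] ≥ (K/8)·(1 - C^{1/2})·γ. -/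
/-!
Let `α̂(ω)` index the density of the family nearest to `est ω` in Hellinger distance. The
Hellinger distance is the L² distance between square roots, so the triangle inequality gives
`γ ‖α̂ - α‖₀ ≤ h²(f_α̂, f_α) ≤ 4 h²(est, f_α)`: the risk at `α` is at least `γ / 4` times the
expected number of coordinates that `α̂` gets wrong.

If `α, α'` differ only in coordinate `j`, the affinity `1 - h² / 2` is multiplicative over the
`n`-fold products, so the sample laws satisfy `h²(P, P') ≤ n h²(f_α, f_α') ≤ C`, and Le Cam's
bound `P(S) + P'(Sᶜ) ≥ 1 - ½ ‖P - P'‖₁ ≥ 1 - √h²(P, P')` shows that `α̂_j` errs under `P` or `P'`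
with total probability at least `1 - √C`. Summing over the `2^K` vertices of the cube, paired with
their neighbours in each of the `K` coordinates, bounds the average risk, hence the maximal one.
-/

open MeasureTheory Real Finset

section Hellinger

variable {X : Type*} [MeasurableSpace X]

noncomputable def hellingerSq (μ : Measure X) (u v : X → ℝ) : ℝ :=
  ∫ x, (√(u x) - √(v x)) ^ 2 ∂μ

structure IsProbDensity (μ : Measure X) (u : X → ℝ) : Prop where
  nonneg : ∀ x, 0 ≤ u x
  integral_eq_one : ∫ x, u x ∂μ = 1

variable {μ : Measure X} {u v w : X → ℝ}

theorem IsProbDensity.integrable (hu : IsProbDensity μ u) : Integrable u μ :=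
  Integrable.of_integral_ne_zero (by simp [hu.integral_eq_one])

theorem IsProbDensity.memLp_sqrt (hu : IsProbDensity μ u) : MemLp (fun x => √(u x)) 2 μ :=
  (memLp_two_iff_integrable_sq (continuous_sqrt.comp_aestronglyMeasurable hu.integrable.1)).2 <|
    hu.integrable.congr (ae_of_all _ fun x => (sq_sqrt (hu.nonneg x)).symm)

theorem IsProbDensity.measureReal_withDensity (hu : IsProbDensity μ u) {S : Set X}
    (hS : MeasurableSet S) :
    (μ.withDensity fun x => ENNReal.ofReal (u x)).real S = ∫ x in S, u x ∂μ := by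
  rw [measureReal_def, withDensity_apply _ hS, ← ofReal_integral_eq_lintegral_ofReal
    hu.integrable.restrict (ae_of_all _ hu.nonneg),
    ENNReal.toReal_ofReal (setIntegral_nonneg hS fun x _ => hu.nonneg x)]

theorem IsProbDensity.isProbabilityMeasure_withDensity (hu : IsProbDensity μ u) :
    IsProbabilityMeasure (μ.withDensity fun x => ENNReal.ofReal (u x)) := by
  refine ⟨(ENNReal.toReal_eq_one_iff _).1 ?_⟩
  rw [← measureReal_def, hu.measureReal_withDensity MeasurableSet.univ, Measure.restrict_univ,
    hu.integral_eq_one]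

theorem lpNorm_two_eq_sqrt_integral_sq {g : X → ℝ} (hg : AEStronglyMeasurable g μ) :
    lpNorm g 2 μ = √(∫ x, g x ^ 2 ∂μ) := by
  rw [show (2 : ENNReal) = ((2 : NNReal) : ENNReal) from rfl,
    lpNorm_nnreal_eq_integral_norm_rpow two_ne_zero hg, sqrt_eq_rpow]
  simp [one_div]

theorem IsProbDensity.lpNorm_sqrt (hu : IsProbDensity μ u) :
    lpNorm (fun x => √(u x)) 2 μ = 1 := by
  simp [lpNorm_two_eq_sqrt_integral_sq hu.memLp_sqrt.1, sq_sqrt (hu.nonneg _), hu.integral_eq_one]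

theorem hellingerSq_nonneg : 0 ≤ hellingerSq μ u v :=
  integral_nonneg fun _ => sq_nonneg _

theorem hellingerSq_comm (u v : X → ℝ) : hellingerSq μ u v = hellingerSq μ v u := by
  simp only [hellingerSq, sub_sq_comm]

theorem sqrt_hellingerSq_eq_lpNorm (hu : IsProbDensity μ u) (hv : IsProbDensity μ v) :
    √(hellingerSq μ u v) = lpNorm ((fun x => √(u x)) - fun x => √(v x)) 2 μ :=
  (lpNorm_two_eq_sqrt_integral_sq (hu.memLp_sqrt.sub hv.memLp_sqrt).1).symm

theorem sqrt_hellingerSq_le_add (hu : IsProbDensity μ u) (hv : IsProbDensity μ v)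
    (hw : IsProbDensity μ w) :
    √(hellingerSq μ u w) ≤ √(hellingerSq μ u v) + √(hellingerSq μ v w) := by
  simpa only [sqrt_hellingerSq_eq_lpNorm, hu, hv, hw] using
    lpNorm_sub_le_lpNorm_sub_add_lpNorm_sub hu.memLp_sqrt hv.memLp_sqrt one_le_two

theorem hellingerSq_le_four (hu : IsProbDensity μ u) (hv : IsProbDensity μ v) :
    hellingerSq μ u v ≤ 4 := by
  have h := lpNorm_sub_le hu.memLp_sqrt (g := fun x => √(v x)) (by norm_num)
  rw [← sqrt_hellingerSq_eq_lpNorm hu hv, hu.lpNorm_sqrt, hv.lpNorm_sqrt] at h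
  nlinarith [sq_sqrt (hellingerSq_nonneg (μ := μ) (u := u) (v := v)),
    sqrt_nonneg (hellingerSq μ u v)]

theorem hellingerSq_le_four_mul_of_le (hu : IsProbDensity μ u) (hv : IsProbDensity μ v)
    (hw : IsProbDensity μ w) (h : hellingerSq μ v u ≤ hellingerSq μ v w) :
    hellingerSq μ u w ≤ 4 * hellingerSq μ v w := by
  have htri := sqrt_hellingerSq_le_add hu hv hw
  rw [hellingerSq_comm u v] at htri
  calc hellingerSq μ u w = √(hellingerSq μ u w) ^ 2 := (sq_sqrt hellingerSq_nonneg).symm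
    _ ≤ (2 * √(hellingerSq μ v w)) ^ 2 := by gcongr; linarith [sqrt_le_sqrt h]
    _ = 4 * hellingerSq μ v w := by rw [mul_pow, sq_sqrt hellingerSq_nonneg]; norm_num

theorem hellingerSq_eq_two_sub_two_mul (hu : IsProbDensity μ u) (hv : IsProbDensity μ v) :
    hellingerSq μ u v = 2 - 2 * ∫ x, √(u x) * √(v x) ∂μ := by
  have hexp : ∀ x, (√(u x) - √(v x)) ^ 2 = u x + v x - 2 * (√(u x) * √(v x)) := fun x => by
    rw [sub_sq, sq_sqrt (hu.nonneg x), sq_sqrt (hv.nonneg x)]; ring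
  have hmul : Integrable (fun x => √(u x) * √(v x)) μ :=
    hu.memLp_sqrt.integrable_mul hv.memLp_sqrt
  have hadd : Integrable (fun x => u x + v x) μ := hu.integrable.add hv.integrable
  simp only [hellingerSq, hexp]
  rw [integral_sub hadd (hmul.const_mul 2),
    integral_add hu.integrable hv.integrable, integral_const_mul, hu.integral_eq_one,
    hv.integral_eq_one]
  ring

theorem integral_abs_mul_abs_le_lpNorm_mul_lpNorm {f g : X → ℝ} (hf : MemLp f 2 μ)
    (hg : MemLp g 2 μ) : ∫ x, |f x| * |g x| ∂μ ≤ lpNorm f 2 μ * lpNorm g 2 μ := by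
  have h := integral_mul_norm_le_Lp_mul_Lq (p := 2) (q := 2) HolderConjugate.two_two
    (by simpa using hf) (by simpa using hg)
  simp only [norm_eq_abs, rpow_two, sq_abs, ← sqrt_eq_rpow] at h
  rwa [lpNorm_two_eq_sqrt_integral_sq hf.1, lpNorm_two_eq_sqrt_integral_sq hg.1]

theorem integral_abs_sub_le_two_mul_sqrt_hellingerSq (hu : IsProbDensity μ u)
    (hv : IsProbDensity μ v) : ∫ x, |u x - v x| ∂μ ≤ 2 * √(hellingerSq μ u v) := by
  have hfac : ∀ x, |u x - v x| = |√(u x) - √(v x)| * |√(u x) + √(v x)| := fun x => by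
    rw [← abs_mul, ← sq_sqrt (hu.nonneg x), ← sq_sqrt (hv.nonneg x)]
    simp only [sqrt_sq (sqrt_nonneg _)]
    ring_nf
  have hsum : lpNorm ((fun x => √(u x)) + fun x => √(v x)) 2 μ ≤ 2 := by
    linarith [lpNorm_add_le hu.memLp_sqrt (g := fun x => √(v x)) (by norm_num),
      hu.lpNorm_sqrt, hv.lpNorm_sqrt]
  calc ∫ x, |u x - v x| ∂μ = ∫ x, |√(u x) - √(v x)| * |√(u x) + √(v x)| ∂μ := by
        simp only [hfac]
    _ ≤ √(hellingerSq μ u v) * lpNorm ((fun x => √(u x)) + fun x => √(v x)) 2 μ := by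
        rw [sqrt_hellingerSq_eq_lpNorm hu hv]
        exact integral_abs_mul_abs_le_lpNorm_mul_lpNorm (hu.memLp_sqrt.sub hv.memLp_sqrt)
          (hu.memLp_sqrt.add hv.memLp_sqrt)
    _ ≤ 2 * √(hellingerSq μ u v) := by nlinarith [sqrt_nonneg (hellingerSq μ u v)]

theorem one_sub_half_integral_abs_sub_le (hu : IsProbDensity μ u) (hv : IsProbDensity μ v)
    {S : Set X} (hS : MeasurableSet S) :
    1 - (∫ x, |u x - v x| ∂μ) / 2 ≤ ∫ x in S, u x ∂μ + ∫ x in Sᶜ, v x ∂μ := by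
  have hmin : ∀ x, min (u x) (v x) = (u x + v x - |u x - v x|) / 2 := fun x => by
    rcases le_total (u x) (v x) with h | h
    · rw [min_eq_left h, abs_of_nonpos (sub_nonpos.2 h)]; ring
    · rw [min_eq_right h, abs_of_nonneg (sub_nonneg.2 h)]; ring
  have hadd : Integrable (fun x => u x + v x) μ := hu.integrable.add hv.integrable
  have habs : Integrable (fun x => |u x - v x|) μ := (hu.integrable.sub hv.integrable).abs
  have hint : Integrable (fun x => min (u x) (v x)) μ := by
    simp only [hmin]
    exact (hadd.sub habs).div_const 2
  calc 1 - (∫ x, |u x - v x| ∂μ) / 2 = ∫ x, min (u x) (v x) ∂μ := by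
        simp only [hmin]
        rw [integral_div, integral_sub hadd habs, integral_add hu.integrable hv.integrable,
          hu.integral_eq_one, hv.integral_eq_one]
        ring
    _ = ∫ x in S, min (u x) (v x) ∂μ + ∫ x in Sᶜ, min (u x) (v x) ∂μ :=
        (integral_add_compl hS hint).symm
    _ ≤ ∫ x in S, u x ∂μ + ∫ x in Sᶜ, v x ∂μ :=
        add_le_add
          (setIntegral_mono hint.integrableOn hu.integrable.integrableOn fun x => min_le_left _ _)
          (setIntegral_mono hint.integrableOn hv.integrable.integrableOn fun x => min_le_right _ _)

theorem one_sub_sqrt_hellingerSq_le (hu : IsProbDensity μ u) (hv : IsProbDensity μ v)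
    {S : Set X} (hS : MeasurableSet S) :
    1 - √(hellingerSq μ u v) ≤ (μ.withDensity fun x => ENNReal.ofReal (u x)).real S +
      (μ.withDensity fun x => ENNReal.ofReal (v x)).real Sᶜ := by
  rw [hu.measureReal_withDensity hS, hv.measureReal_withDensity hS.compl]
  linarith [one_sub_half_integral_abs_sub_le hu hv hS,
    integral_abs_sub_le_two_mul_sqrt_hellingerSq hu hv]

end Hellinger

theorem measurable_hellingerSq {Ω X : Type*} [MeasurableSpace Ω] [MeasurableSpace X]
    {μ : Measure X} [SFinite μ] {g : Ω → X → ℝ} (hg : Measurable (Function.uncurry g))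
    {u : X → ℝ} (hu : Measurable u) : Measurable fun ω => hellingerSq μ (g ω) u :=
  (((hg.sqrt.sub (hu.comp measurable_snd).sqrt).pow_const 2).stronglyMeasurable
    |>.integral_prod_right').measurable

theorem integrable_hellingerSq {Ω X : Type*} [MeasurableSpace Ω] [MeasurableSpace X]
    {μ : Measure X} [SFinite μ] {P : Measure Ω} [IsFiniteMeasure P] {g : Ω → X → ℝ}
    (hg : Measurable (Function.uncurry g)) (hg' : ∀ ω, IsProbDensity μ (g ω)) {u : X → ℝ}
    (hu : Measurable u) (hu' : IsProbDensity μ u) :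
    Integrable (fun ω => hellingerSq μ (g ω) u) P :=
  .of_bound (measurable_hellingerSq hg hu).aestronglyMeasurable 4 <| ae_of_all _ fun ω => by
    rw [norm_of_nonneg hellingerSq_nonneg]
    exact hellingerSq_le_four (hg' ω) hu'

section Product

variable {ι : Type*} [Fintype ι]

theorem pi_withDensity_ofReal {X : ι → Type*} [∀ i, MeasurableSpace (X i)]
    {μ : ∀ i, Measure (X i)} [∀ i, SigmaFinite (μ i)] {u : ∀ i, X i → ℝ}
    (hu : ∀ i, IsProbDensity (μ i) (u i)) :
    Measure.pi (fun i => (μ i).withDensity fun x => ENNReal.ofReal (u i x)) =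
      (Measure.pi μ).withDensity fun ω => ENNReal.ofReal (∏ i, u i (ω i)) := by
  have hprob i := (hu i).isProbabilityMeasure_withDensity
  refine Measure.pi_eq fun s hs => ?_
  have hprod : Integrable (fun ω => ∏ i, u i (ω i)) (Measure.pi fun i => (μ i).restrict (s i)) :=
    Integrable.fintype_prod_dep fun i => (hu i).integrable.restrict
  rw [withDensity_apply _ (MeasurableSet.univ_pi hs), Measure.restrict_pi_pi,
    ← ofReal_integral_eq_lintegral_ofReal hprod
      (ae_of_all _ fun ω => prod_nonneg fun i _ => (hu i).nonneg _),
    integral_fintype_prod_eq_prod,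
    ENNReal.ofReal_prod_of_nonneg fun i _ => setIntegral_nonneg (hs i) fun x _ => (hu i).nonneg x]
  refine prod_congr rfl fun i _ => ?_
  rw [← (hu i).measureReal_withDensity (hs i), ofReal_measureReal]

variable {X : Type*} [MeasurableSpace X] {μ : Measure X} [SigmaFinite μ] {u v : X → ℝ}

theorem IsProbDensity.pi (hu : IsProbDensity μ u) :
    IsProbDensity (Measure.pi fun _ : ι => μ) fun ω => ∏ i, u (ω i) :=
  ⟨fun _ => prod_nonneg fun _ _ => hu.nonneg _, by
    rw [integral_fintype_prod_eq_pow, hu.integral_eq_one, one_pow]⟩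

theorem hellingerSq_pi_le (hu : IsProbDensity μ u) (hv : IsProbDensity μ v) :
    hellingerSq (Measure.pi fun _ : ι => μ) (fun ω => ∏ i, u (ω i)) (fun ω => ∏ i, v (ω i)) ≤
      Fintype.card ι * hellingerSq μ u v := by
  rw [hellingerSq_eq_two_sub_two_mul hu.pi hv.pi, hellingerSq_eq_two_sub_two_mul hu hv]
  simp only [sqrt_prod _ fun i _ => hu.nonneg _, sqrt_prod _ fun i _ => hv.nonneg _,
    ← prod_mul_distrib]
  rw [integral_fintype_prod_eq_pow (fun x => √(u x) * √(v x))]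
  set ρ := ∫ x, √(u x) * √(v x) ∂μ
  have hρ : 0 ≤ ρ := integral_nonneg fun x => mul_nonneg (sqrt_nonneg _) (sqrt_nonneg _)
  -- Bernoulli's inequality `1 - n (1 - ρ) ≤ ρ ^ n`
  have := one_add_mul_le_pow (a := ρ - 1) (by linarith) (Fintype.card ι)
  rw [add_sub_cancel] at this
  linarith

theorem one_sub_sqrt_le_pi_withDensity (hu : IsProbDensity μ u) (hv : IsProbDensity μ v)
    {c : ℝ} (hc : Fintype.card ι * hellingerSq μ u v ≤ c) {S : Set (ι → X)}
    (hS : MeasurableSet S) :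
    1 - √c ≤ (Measure.pi fun _ : ι => μ.withDensity fun x => ENNReal.ofReal (u x)).real S +
      (Measure.pi fun _ : ι => μ.withDensity fun x => ENNReal.ofReal (v x)).real Sᶜ := by
  rw [pi_withDensity_ofReal fun _ => hu, pi_withDensity_ofReal fun _ => hv]
  linarith [one_sub_sqrt_hellingerSq_le hu.pi hv.pi hS,
    sqrt_le_sqrt ((hellingerSq_pi_le (ι := ι) hu hv).trans hc)]

end Product

theorem exists_measurable_argmin {Ω A : Type*} [MeasurableSpace Ω] [MeasurableSpace A] [Finite A]
    [Nonempty A] (H : Ω → A → ℝ) (hH : ∀ a, Measurable fun ω => H ω a) :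
    ∃ sel : Ω → A, Measurable sel ∧ ∀ ω a, H ω (sel ω) ≤ H ω a := by
  classical
  obtain ⟨e, he⟩ := exists_surjective_nat A
  have hmin : ∀ ω, ∃ k, ∀ a, H ω (e k) ≤ H ω a := fun ω => by
    obtain ⟨a, ha⟩ := Finite.exists_min (H ω)
    obtain ⟨k, rfl⟩ := he a
    exact ⟨k, ha⟩
  refine ⟨fun ω => e (Nat.find (hmin ω)), measurable_from_nat.comp (measurable_find hmin
    fun k => ?_), fun ω => Nat.find_spec (hmin ω)⟩
  simp only [Set.ofPred_forall]
  exact MeasurableSet.iInter fun a => measurableSet_le (hH _) (hH a)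

theorem mul_sum_measureReal_le_integral {Ω ι β : Type*} [MeasurableSpace Ω] [Fintype ι]
    [DecidableEq β] {P : Measure Ω} [IsFiniteMeasure P] {sel : Ω → ι → β} {α : ι → β}
    (hS : ∀ j, MeasurableSet {ω | sel ω j ≠ α j}) {L : Ω → ℝ} (hL : Integrable L P) {κ : ℝ}
    (h : ∀ ω, κ * hammingDist (sel ω) α ≤ L ω) :
    κ * ∑ j, P.real {ω | sel ω j ≠ α j} ≤ ∫ ω, L ω ∂P := by
  have hsum : ∀ ω,
      (hammingDist (sel ω) α : ℝ) = ∑ j, {ω | sel ω j ≠ α j}.indicator (1 : Ω → ℝ) ω :=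
    fun ω => by simp [hammingDist, card_filter, Set.indicator_apply]
  have hind : ∀ j, Integrable ({ω | sel ω j ≠ α j}.indicator (1 : Ω → ℝ)) P :=
    fun j => (integrable_const 1).indicator (hS j)
  calc κ * ∑ j, P.real {ω | sel ω j ≠ α j} = ∫ ω, κ * hammingDist (sel ω) α ∂P := by
        simp only [hsum, integral_const_mul]
        rw [integral_finsetSum _ fun j _ => hind j]
        simp only [integral_indicator_one (hS _)]
    _ ≤ ∫ ω, L ω ∂P := by
        refine integral_mono ?_ hL h
        simp only [hsum]
        exact (integrable_finsetSum _ fun j _ => hind j).const_mul κ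

section Cube

variable {ι : Type*} [DecidableEq ι]

def flipCoord (j : ι) (α : ι → Bool) : ι → Bool :=
  Function.update α j (!α j)

@[simp]
theorem flipCoord_apply_self (j : ι) (α : ι → Bool) : flipCoord j α j = !α j := by
  simp [flipCoord]

theorem flipCoord_involutive (j : ι) : Function.Involutive (flipCoord j) := fun α => by
  ext i
  rcases eq_or_ne i j with rfl | h
  · simp
  · simp [flipCoord, Function.update_of_ne h]

theorem hammingDist_flipCoord [Fintype ι] (j : ι) (α : ι → Bool) :
    hammingDist α (flipCoord j α) = 1 := by
  rw [hammingDist, card_eq_one]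
  refine ⟨j, ?_⟩
  ext i
  simp only [mem_filter, mem_univ, true_and, mem_singleton]
  rcases eq_or_ne i j with rfl | h
  · simp
  · simp [flipCoord, h]

theorem le_iSup_of_le_add_flipCoord [Fintype ι] {R : (ι → Bool) → ℝ} {t : (ι → Bool) → ι → ℝ}
    {κ c : ℝ} (hκ : 0 ≤ κ) (hR : ∀ α, κ * ∑ j, t α j ≤ R α)
    (ht : ∀ α j, c ≤ t α j + t (flipCoord j α) j) :
    κ * (Fintype.card ι * c / 2) ≤ ⨆ α, R α := by
  have hpair : ∀ j, 2 ^ Fintype.card ι * c ≤ 2 * ∑ α, t α j := fun j =>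
    calc 2 ^ Fintype.card ι * c = ∑ _α : ι → Bool, c := by simp
      _ ≤ ∑ α, (t α j + t (flipCoord j α) j) := sum_le_sum fun α _ => ht α j
      _ = 2 * ∑ α, t α j := by
        rw [sum_add_distrib, Fintype.sum_bijective _ (flipCoord_involutive j).bijective
          (fun α => t (flipCoord j α) j) (fun α => t α j) fun _ => rfl]
        ring
  have hsum : 2 ^ Fintype.card ι * (κ * (Fintype.card ι * c / 2)) ≤ ∑ α, R α :=
    calc 2 ^ Fintype.card ι * (κ * (Fintype.card ι * c / 2))
        = κ * ∑ _j : ι, 2 ^ Fintype.card ι * c / 2 := by simp; ring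
      _ ≤ κ * ∑ j, ∑ α, t α j := by gcongr with j; linarith [hpair j]
      _ = ∑ α, κ * ∑ j, t α j := by rw [sum_comm, mul_sum]
      _ ≤ ∑ α, R α := sum_le_sum fun α _ => hR α
  have hmax : ∑ α, R α ≤ 2 ^ Fintype.card ι * ⨆ α, R α :=
    calc ∑ α, R α ≤ ∑ _α : ι → Bool, ⨆ β, R β :=
          sum_le_sum fun α _ => le_ciSup (Set.finite_range R).bddAbove α
      _ = 2 ^ Fintype.card ι * ⨆ α, R α := by simp
  exact le_of_mul_le_mul_left (hsum.trans hmax) (by positivity)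

end Cube

theorem assouad_hellinger_general {d K n : ℕ} (hn : 0 < n)
    (f : (Fin K → Bool) → EuclideanSpace ℝ (Fin d) → ℝ)
    (hmeas : ∀ α, Measurable (f α))
    (hnonneg : ∀ α x, 0 ≤ f α x)
    (hint : ∀ α, ∫ x, f α x = 1)
    (γ : ℝ) (hγ : 0 < γ)
    (hsep : ∀ α β : Fin K → Bool,
      γ * ((Finset.univ.filter fun i => α i ≠ β i).card : ℝ) ≤
        ∫ x, (Real.sqrt (f α x) - Real.sqrt (f β x)) ^ 2)
    (C : ℝ)
    (hclose : ∀ α β : Fin K → Bool,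
      (Finset.univ.filter fun i => α i ≠ β i).card = 1 →
        (∫ x, (Real.sqrt (f α x) - Real.sqrt (f β x)) ^ 2) ≤ C / n)
    (est : (Fin n → EuclideanSpace ℝ (Fin d)) → EuclideanSpace ℝ (Fin d) → ℝ)
    (hest_meas : Measurable (Function.uncurry est))
    (hest_nonneg : ∀ ω x, 0 ≤ est ω x)
    (hest_int : ∀ ω, ∫ x, est ω x = 1) :
    (K : ℝ) / 8 * (1 - Real.sqrt C) * γ ≤
      ⨆ α : Fin K → Bool,
        ∫ ω, (∫ x, (Real.sqrt (est ω x) - Real.sqrt (f α x)) ^ 2)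
          ∂(Measure.pi fun _ : Fin n =>
              volume.withDensity fun x => ENNReal.ofReal (f α x)) := by
  have hf α : IsProbDensity volume (f α) := ⟨hnonneg α, hint α⟩
  have hest ω : IsProbDensity volume (est ω) := ⟨hest_nonneg ω, hest_int ω⟩
  have hprob α := (hf α).isProbabilityMeasure_withDensity
  obtain ⟨sel, hsel, hsel_min⟩ := exists_measurable_argmin _
    fun α => measurable_hellingerSq (μ := volume) hest_meas (hmeas α)
  have hS (α : Fin K → Bool) (j : Fin K) : MeasurableSet {ω | sel ω j ≠ α j} :=
    ((measurable_pi_apply j).comp hsel) (measurableSet_singleton (α j)).compl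
  refine le_of_eq_of_le (by rw [Fintype.card_fin]; ring)
    (le_iSup_of_le_add_flipCoord (κ := γ / 4) (c := 1 - √C)
    (t := fun α j => (Measure.pi fun _ : Fin n =>
      volume.withDensity fun x => ENNReal.ofReal (f α x)).real {ω | sel ω j ≠ α j})
    (by positivity) (fun α => ?_) fun α j => ?_)
  · refine mul_sum_measureReal_le_integral (hS α)
      (integrable_hellingerSq hest_meas hest (hmeas α) (hf α)) fun ω => ?_
    have hsep' : γ * hammingDist (sel ω) α ≤ hellingerSq volume (f (sel ω)) (f α) :=
      hsep (sel ω) α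
    linarith [hellingerSq_le_four_mul_of_le (hf _) (hest ω) (hf α) (hsel_min ω α)]
  · have hc : Fintype.card (Fin n) * hellingerSq volume (f α) (f (flipCoord j α)) ≤ C := by
      rw [Fintype.card_fin, ← le_div_iff₀' (by exact_mod_cast hn)]
      exact hclose _ _ (hammingDist_flipCoord j α)
    have hcompl : {ω | sel ω j ≠ flipCoord j α j} = {ω | sel ω j ≠ α j}ᶜ := by
      ext ω
      simp
    simpa only [hcompl] using one_sub_sqrt_le_pi_withDensity (hf α) (hf _) hc (hS α j)

/-- Assouad's lemma for squared Hellinger loss: if `{f_α : α ∈ {0,1}^K}` are densities on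
`ℝ^d` with `h²(f_α,f_β) ≥ γ‖α-β‖₀` and `h²(f_α,f_β) ≤ C/n` whenever `‖α-β‖₀ = 1`
(`C ∈ (0,1)`), then any estimator based on an i.i.d. sample of size `n` has supremum risk
at least `(K/8)(1-√C)γ`. -/
theorem assouad_hellinger {d K n : ℕ} (hn : 0 < n)
    (f : (Fin K → Bool) → EuclideanSpace ℝ (Fin d) → ℝ)
    (hmeas : ∀ α, Measurable (f α))
    (hnonneg : ∀ α x, 0 ≤ f α x)
    (hint : ∀ α, ∫ x, f α x = 1)
    (γ : ℝ) (hγ : 0 < γ)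
    (hsep : ∀ α β : Fin K → Bool,
      γ * ((Finset.univ.filter fun i => α i ≠ β i).card : ℝ) ≤
        ∫ x, (Real.sqrt (f α x) - Real.sqrt (f β x)) ^ 2)
    (C : ℝ) (hC0 : 0 < C) (hC1 : C < 1)
    (hclose : ∀ α β : Fin K → Bool,
      (Finset.univ.filter fun i => α i ≠ β i).card = 1 →
        (∫ x, (Real.sqrt (f α x) - Real.sqrt (f β x)) ^ 2) ≤ C / n)
    (est : (Fin n → EuclideanSpace ℝ (Fin d)) → EuclideanSpace ℝ (Fin d) → ℝ)
    (hest_meas : Measurable (Function.uncurry est))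
    (hest_nonneg : ∀ ω x, 0 ≤ est ω x)
    (hest_int : ∀ ω, ∫ x, est ω x = 1) :
    (K : ℝ) / 8 * (1 - Real.sqrt C) * γ ≤
      ⨆ α : Fin K → Bool,
        ∫ ω, (∫ x, (Real.sqrt (est ω x) - Real.sqrt (f α x)) ^ 2)
          ∂(Measure.pi fun _ : Fin n =>
              volume.withDensity fun x => ENNReal.ofReal (f α x)) :=
  assouad_hellinger_general hn f hmeas hnonneg hint γ hγ hsep C hclose est hest_meas hest_nonneg
    hest_int
end

section
/- For d ≥ 2, the ratio of Gamma functions satisfies 2(d+1)^{1/2}/(3^{1/2}π^{1/2}) ≤ Γ(1 + d/2)/Γ((d+1)/2) ≤ (d+1)^{1/2}/2^{1/2}. -/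
/-!
Write `G x = Γ(1 + x/2) / Γ((x+1)/2)`. Log-convexity of `Γ` at the midpoint `1 + x/2` of
`(x+1)/2` and `(x+3)/2 = (x+1)/2 + 1` gives `G x ^ 2 ≤ (x+1)/2`, the upper bound.
For the lower bound, `Γ(s+1) = s Γ(s)` gives `G (x+2) = (x+2)/(x+1) · G x`, and since
`(x+1)(x+3) ≤ (x+2)^2` the quotient `G x / √(x+1)` increases along `x ↦ x + 2`. So it suffices to
check `d = 2`, where equality holds (`G 2 = 2/√π`), and `d = 3` (`G 3 = 3√π/4`), which needs
`π > 3.08`.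
-/

open Real

noncomputable def gammaHalfRatio (x : ℝ) : ℝ := Gamma (1 + x / 2) / Gamma ((x + 1) / 2)

lemma Gamma_midpoint_sq_le {x y : ℝ} (hx : 0 < x) (hy : 0 < y) :
    Gamma ((x + y) / 2) ^ 2 ≤ Gamma x * Gamma y := by
  have h := Gamma_mul_add_mul_le_rpow_Gamma_mul_rpow_Gamma hx hy one_half_pos one_half_pos
    (add_halves 1)
  rw [show 1 / 2 * x + 1 / 2 * y = (x + y) / 2 by ring, ← mul_rpow (Gamma_pos_of_pos hx).le
    (Gamma_pos_of_pos hy).le, ← sqrt_eq_rpow] at h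
  calc Gamma ((x + y) / 2) ^ 2 ≤ √(Gamma x * Gamma y) ^ 2 := by gcongr
    _ = Gamma x * Gamma y := sq_sqrt (mul_pos (Gamma_pos_of_pos hx) (Gamma_pos_of_pos hy)).le

lemma gammaHalfRatio_add_two {x : ℝ} (h₁ : x + 1 ≠ 0) (h₂ : x + 2 ≠ 0) :
    gammaHalfRatio (x + 2) = (x + 2) / (x + 1) * gammaHalfRatio x := by
  have e₁ : 1 + (x + 2) / 2 = (1 + x / 2) + 1 := by ring
  have e₂ : (x + 2 + 1) / 2 = (x + 1) / 2 + 1 := by ring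
  rw [gammaHalfRatio, gammaHalfRatio, e₁, e₂, Gamma_add_one (by contrapose! h₂; linarith),
    Gamma_add_one (by contrapose! h₁; linarith), mul_div_mul_comm]
  congr 1
  field_simp
  ring

lemma gammaHalfRatio_sq_le {x : ℝ} (hx : -1 < x) : gammaHalfRatio x ^ 2 ≤ (x + 1) / 2 := by
  have hs : 0 < (x + 1) / 2 := by linarith
  have h := Gamma_midpoint_sq_le hs (add_pos hs one_pos)
  rw [show ((x + 1) / 2 + ((x + 1) / 2 + 1)) / 2 = 1 + x / 2 by ring, Gamma_add_one hs.ne'] at h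
  rw [gammaHalfRatio, div_pow, div_le_iff₀ (pow_pos (Gamma_pos_of_pos hs) 2)]
  linarith

lemma gammaHalfRatio_le_sqrt {x : ℝ} (hx : -1 < x) : gammaHalfRatio x ≤ √(x + 1) / √2 := by
  rw [← sqrt_div (by linarith)]
  exact (le_abs_self _).trans (abs_le_sqrt (gammaHalfRatio_sq_le hx))

lemma sqrt_add_three_le_mul_sqrt_add_one {x : ℝ} (hx : 0 < x + 1) :
    √(x + 3) ≤ (x + 2) / (x + 1) * √(x + 1) := by
  have h : √(x + 3) * √(x + 1) ≤ x + 2 := by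
    rw [← sqrt_mul (by linarith)]
    exact sqrt_le_iff.mpr ⟨by linarith, by nlinarith⟩
  rw [div_mul_eq_mul_div, le_div_iff₀ hx]
  calc √(x + 3) * (x + 1) = √(x + 3) * √(x + 1) * √(x + 1) := by
        rw [mul_assoc, mul_self_sqrt hx.le]
    _ ≤ (x + 2) * √(x + 1) := by gcongr

lemma mul_sqrt_le_gammaHalfRatio_add_two {c x : ℝ} (hc : 0 ≤ c) (hx : -1 < x)
    (h : c * √(x + 1) ≤ gammaHalfRatio x) : c * √(x + 2 + 1) ≤ gammaHalfRatio (x + 2) := by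
  rw [gammaHalfRatio_add_two (by linarith) (by linarith), show x + 2 + 1 = x + 3 by ring]
  calc c * √(x + 3) ≤ c * ((x + 2) / (x + 1) * √(x + 1)) :=
        mul_le_mul_of_nonneg_left (sqrt_add_three_le_mul_sqrt_add_one (by linarith)) hc
    _ = (x + 2) / (x + 1) * (c * √(x + 1)) := by ring
    _ ≤ (x + 2) / (x + 1) * gammaHalfRatio x :=
        mul_le_mul_of_nonneg_left h (div_nonneg (by linarith) (by linarith))

lemma Gamma_three_halves : Gamma (3 / 2) = √π / 2 := by
  rw [show (3 / 2 : ℝ) = 1 / 2 + 1 by norm_num, Gamma_add_one (by norm_num), Gamma_one_half_eq]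
  ring

lemma gammaHalfRatio_two : gammaHalfRatio 2 = 2 / √π := by
  rw [gammaHalfRatio, show (1 : ℝ) + 2 / 2 = 2 by norm_num, show ((2 : ℝ) + 1) / 2 = 3 / 2 by
    norm_num, Gamma_two, Gamma_three_halves]
  ring

lemma gammaHalfRatio_three : gammaHalfRatio 3 = 3 * √π / 4 := by
  rw [gammaHalfRatio, show (1 : ℝ) + 3 / 2 = 1 / 2 + 1 + 1 by norm_num, show ((3 : ℝ) + 1) / 2 = 2
    by norm_num, Gamma_two, Gamma_add_one (by norm_num), Gamma_add_one (by norm_num),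
    Gamma_one_half_eq]
  ring

lemma mul_sqrt_le_gammaHalfRatio_of_two_le {d : ℕ} (hd : 2 ≤ d) :
    2 / (√3 * √π) * √((d : ℝ) + 1) ≤ gammaHalfRatio d := by
  induction d using Nat.strong_induction_on with
  | _ d ih =>
    rcases (show d = 2 ∨ d = 3 ∨ 4 ≤ d by omega) with rfl | rfl | hd
    · norm_num [gammaHalfRatio_two]
      exact le_of_eq (by field_simp)
    · norm_num [gammaHalfRatio_three]
      have hπ : 0 < √π := sqrt_pos.mpr pi_pos
      have h3 : 1.7 < √3 := lt_sqrt_of_sq_lt (by norm_num)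
      have hπ' : √π * √π = π := mul_self_sqrt pi_pos.le
      rw [div_mul_eq_mul_div, div_le_div_iff₀ (by positivity) (by norm_num)]
      nlinarith [pi_gt_d2]
    · obtain ⟨n, rfl⟩ : ∃ n, d = n + 2 := ⟨d - 2, by omega⟩
      push_cast
      exact mul_sqrt_le_gammaHalfRatio_add_two (by positivity)
        (by linarith [n.cast_nonneg (α := ℝ)]) (ih n (by omega) (by omega))

/-- For integers `d ≥ 2`,
`2(d+1)^{1/2}/(3^{1/2}π^{1/2}) ≤ Γ(1+d/2)/Γ((d+1)/2) ≤ (d+1)^{1/2}/2^{1/2}`. -/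
theorem gamma_ratio_bounds (d : ℕ) (hd : 2 ≤ d) :
    2 * Real.sqrt (d + 1) / (Real.sqrt 3 * Real.sqrt Real.pi) ≤
      Real.Gamma (1 + (d : ℝ) / 2) / Real.Gamma (((d : ℝ) + 1) / 2) ∧
    Real.Gamma (1 + (d : ℝ) / 2) / Real.Gamma (((d : ℝ) + 1) / 2) ≤
      Real.sqrt (d + 1) / Real.sqrt 2 := by
  refine ⟨?_, gammaHalfRatio_le_sqrt (by linarith [d.cast_nonneg (α := ℝ)])⟩
  rw [mul_div_right_comm]
  exact mul_sqrt_le_gammaHalfRatio_of_two_le hd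
end
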